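/- For j ≥ 2 and k ≥ 1, the polynomials Q_j(k) = Σ_{i=0}^{⌊j/2⌋} C(j−2, 2i+1)·C(k−i+j−2, j−2) satisfy the difference relation Q_j(k) − Q_j(k−1) = C(j+2k−2, j−3). -/

import Mathlib

/-- Binomial coefficient with integer arguments, zero outside `0 ≤ k ≤ n`. -/
def chooseZ (n k : ℤ) : ℤ := if 0 ≤ k ∧ k ≤ n then (Nat.choose n.toNat k.toNat : ℤ) else 0

/-- `Q_j(k) = Σ_{i=0}^{⌊j/2⌋} C(j−2, 2i+1)·C(k−i+j−2, j−2)`. -/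
def Q (j : ℕ) (k : ℤ) : ℤ :=
  ∑ i ∈ Finset.range (j / 2 + 1),
    ((j - 2).choose (2 * i + 1) : ℤ) * chooseZ (k - i + j - 2) ((j : ℤ) - 2)

lemma chooseZ_of_lt {n r : ℤ} (h : n < r) : chooseZ n r = 0 := by
  unfold chooseZ; rw [if_neg]; rintro ⟨h1, h2⟩; omega

lemma chooseZ_of_neg {n r : ℤ} (h : r < 0) : chooseZ n r = 0 := by
  unfold chooseZ; rw [if_neg]; rintro ⟨h1, h2⟩; omega

lemma chooseZ_natCast (a b : ℕ) : chooseZ (a : ℤ) (b : ℤ) = (a.choose b : ℤ) := by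
  unfold chooseZ
  by_cases h : b ≤ a
  · rw [if_pos ⟨by positivity, by exact_mod_cast h⟩]
    simp
  · rw [if_neg (by rintro ⟨h1, h2⟩; exact h (by exact_mod_cast h2)),
      Nat.choose_eq_zero_of_lt (by omega)]
    simp

lemma chooseZ_zero (n : ℤ) (h : 0 ≤ n) : chooseZ n 0 = 1 := by
  unfold chooseZ; rw [if_pos ⟨le_refl 0, h⟩]; simp

lemma chooseZ_pascal (n r : ℤ) (hn : 1 ≤ n) :
    chooseZ n r = chooseZ (n-1) r + chooseZ (n-1) (r-1) := by
  rcases lt_or_ge r 0 with h | h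
  · rw [chooseZ_of_neg h, chooseZ_of_neg h, chooseZ_of_neg (by omega)]; ring
  rcases eq_or_lt_of_le h with h0 | h1
  · rw [← h0, chooseZ_zero n (by omega), chooseZ_zero (n-1) (by omega),
      chooseZ_of_neg (by norm_num)]
    ring
  · obtain ⟨a, rfl⟩ := Int.eq_ofNat_of_zero_le (by omega : (0:ℤ) ≤ n)
    obtain ⟨b, rfl⟩ := Int.eq_ofNat_of_zero_le (by omega : (0:ℤ) ≤ r)
    have ha : 1 ≤ a := by exact_mod_cast hn
    have hb : 1 ≤ b := by exact_mod_cast h1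
    obtain ⟨a', rfl⟩ := Nat.exists_eq_add_of_le ha
    obtain ⟨b', rfl⟩ := Nat.exists_eq_add_of_le hb
    have e1 : ((1 + a' : ℕ) : ℤ) - 1 = (a' : ℤ) := by push_cast; ring
    have e2 : ((1 + b' : ℕ) : ℤ) - 1 = (b' : ℤ) := by push_cast; ring
    rw [e1, e2, chooseZ_natCast, chooseZ_natCast, chooseZ_natCast]
    rw [show 1 + a' = a' + 1 by ring, show 1 + b' = b' + 1 by ring,
      Nat.choose_succ_succ]
    push_cast; ring

lemma chooseZ_pascal' (n r : ℤ) (hn : 0 ≤ n) :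
    chooseZ (n+1) (r+1) = chooseZ n (r+1) + chooseZ n r := by
  rw [chooseZ_pascal (n+1) (r+1) (by omega)]
  simp only [add_sub_cancel_right]

lemma term_pascal' (c n r : ℤ) (h : c ≠ 0 → 0 ≤ n) :
    c * chooseZ (n+1) (r+1) - c * chooseZ n (r+1) = c * chooseZ n r := by
  rcases eq_or_ne c 0 with rfl | hc
  · simp
  · rw [chooseZ_pascal' n r (h hc)]; ring

def S (m : ℕ) (k : ℤ) : ℤ :=
  ∑ i ∈ Finset.range (m+1), (m.choose (2*i+1) : ℤ) * chooseZ (k + m - 1 - i) ((m:ℤ) - 1)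

def T (m : ℕ) (k : ℤ) : ℤ :=
  ∑ i ∈ Finset.range (m+1), (m.choose (2*i) : ℤ) * chooseZ (k + m - 1 - i) ((m:ℤ) - 1)

lemma S_diff (m : ℕ) (k : ℤ) (hk : 1 ≤ k) :
    S (m+1) k - S (m+1) (k-1) = T m k + S m k := by
  have key : ∀ i ∈ Finset.range (m+1+1),
      ((m+1).choose (2*i+1) : ℤ) * chooseZ (k + ((m:ℤ)+1) - 1 - i) (((m:ℤ)+1) - 1)
      - ((m+1).choose (2*i+1) : ℤ) * chooseZ ((k-1) + ((m:ℤ)+1) - 1 - i) (((m:ℤ)+1) - 1)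
      = ((m.choose (2*i) : ℤ) + (m.choose (2*i+1) : ℤ))
        * chooseZ (k + (m:ℤ) - 1 - i) ((m:ℤ) - 1) := by
    intro i hi
    rw [show ((m+1).choose (2*i+1)) = m.choose (2*i) + m.choose (2*i+1) from
        Nat.choose_succ_succ m (2*i)]
    push_cast
    rw [show (k + ((m:ℤ)+1) - 1 - i) = (k + (m:ℤ) - 1 - i) + 1 by ring,
      show ((k-1) + ((m:ℤ)+1) - 1 - (i:ℤ)) = (k + (m:ℤ) - 1 - i) by ring,
      show (((m:ℤ)+1) - 1) = ((m:ℤ) - 1) + 1 by ring]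
    apply term_pascal'
    intro hc
    have hb : 2*i ≤ m := by
      by_contra hb
      rw [Nat.choose_eq_zero_of_lt (by omega), Nat.choose_eq_zero_of_lt (by omega)] at hc
      simp at hc
    omega
  have h1 : S (m+1) k - S (m+1) (k-1)
      = ∑ i ∈ Finset.range (m+1+1),
          ((m.choose (2*i) : ℤ) + (m.choose (2*i+1) : ℤ))
            * chooseZ (k + (m:ℤ) - 1 - i) ((m:ℤ) - 1) := by
    rw [S, S, ← Finset.sum_sub_distrib]
    refine Finset.sum_congr rfl ?_
    intro i hi
    have h := key i hi
    push_cast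
    push_cast at h
    exact h
  have e1 : ∑ i ∈ Finset.range (m+1+1),
      (m.choose (2*i) : ℤ) * chooseZ (k + (m:ℤ) - 1 - i) ((m:ℤ) - 1) = T m k := by
    rw [Finset.sum_range_succ, Nat.choose_eq_zero_of_lt (show m < 2*(m+1) by omega), T]
    push_cast; ring
  have e2 : ∑ i ∈ Finset.range (m+1+1),
      (m.choose (2*i+1) : ℤ) * chooseZ (k + (m:ℤ) - 1 - i) ((m:ℤ) - 1) = S m k := by
    rw [Finset.sum_range_succ, Nat.choose_eq_zero_of_lt (show m < 2*(m+1)+1 by omega), S]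
    push_cast; ring
  rw [h1]
  simp only [add_mul, Finset.sum_add_distrib]
  rw [e1, e2]

lemma T_diff (m : ℕ) (k : ℤ) (hk : 1 ≤ k) :
    T (m+1) k - T (m+1) (k-1) = T m k + S m (k-1) := by
  have key : ∀ i ∈ Finset.range (m+1+1),
      ((m+1).choose (2*i) : ℤ) * chooseZ (k + ((m:ℤ)+1) - 1 - i) (((m:ℤ)+1) - 1)
      - ((m+1).choose (2*i) : ℤ) * chooseZ ((k-1) + ((m:ℤ)+1) - 1 - i) (((m:ℤ)+1) - 1)
      = ((m+1).choose (2*i) : ℤ) * chooseZ (k + (m:ℤ) - 1 - i) ((m:ℤ) - 1) := by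
    intro i hi
    rw [show (k + ((m:ℤ)+1) - 1 - i) = (k + (m:ℤ) - 1 - i) + 1 by ring,
      show ((k-1) + ((m:ℤ)+1) - 1 - (i:ℤ)) = (k + (m:ℤ) - 1 - i) by ring,
      show (((m:ℤ)+1) - 1) = ((m:ℤ) - 1) + 1 by ring]
    apply term_pascal'
    intro hc
    have hb : 2*i ≤ m+1 := by
      by_contra hb
      rw [Nat.choose_eq_zero_of_lt (by omega)] at hc
      simp at hc
    omega
  have h1 : T (m+1) k - T (m+1) (k-1)
      = ∑ i ∈ Finset.range (m+1+1),
          ((m+1).choose (2*i) : ℤ) * chooseZ (k + (m:ℤ) - 1 - i) ((m:ℤ) - 1) := by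
    rw [T, T, ← Finset.sum_sub_distrib]
    refine Finset.sum_congr rfl ?_
    intro i hi
    have h := key i hi
    push_cast
    push_cast at h
    exact h
  rw [h1, Finset.sum_range_succ']
  have key2 : ∀ i ∈ Finset.range (m+1),
      ((m+1).choose (2*(i+1)) : ℤ) * chooseZ (k + (m:ℤ) - 1 - ((i+1 : ℕ):ℤ)) ((m:ℤ) - 1)
      = (m.choose (2*i+1) : ℤ) * chooseZ ((k-1) + (m:ℤ) - 1 - i) ((m:ℤ) - 1)
        + (m.choose (2*i+1+1) : ℤ) * chooseZ (k + (m:ℤ) - 1 - ((i+1 : ℕ):ℤ)) ((m:ℤ) - 1) := by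
    intro i hi
    rw [show 2*(i+1) = (2*i+1)+1 by ring, Nat.choose_succ_succ m (2*i+1),
      show ((k-1) + (m:ℤ) - 1 - (i:ℤ)) = (k + (m:ℤ) - 1 - ((i+1 : ℕ):ℤ)) by push_cast; ring]
    push_cast
    ring
  rw [Finset.sum_congr rfl key2, Finset.sum_add_distrib]
  have eS : ∑ i ∈ Finset.range (m+1),
      (m.choose (2*i+1) : ℤ) * chooseZ ((k-1) + (m:ℤ) - 1 - i) ((m:ℤ) - 1) = S m (k-1) := by
    rw [S]
  have eT : ∑ i ∈ Finset.range (m+1),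
      (m.choose (2*i+1+1) : ℤ) * chooseZ (k + (m:ℤ) - 1 - ((i+1 : ℕ):ℤ)) ((m:ℤ) - 1)
      + ((m+1).choose 0 : ℤ) * chooseZ (k + (m:ℤ) - 1 - ((0:ℕ):ℤ)) ((m:ℤ) - 1) = T m k := by
    rw [T,
      Finset.sum_range_succ
        (fun i => (m.choose (2*i+1+1) : ℤ) * chooseZ (k + (m:ℤ) - 1 - ((i+1 : ℕ):ℤ)) ((m:ℤ) - 1)) m,
      Finset.sum_range_succ'
        (fun i => (m.choose (2*i) : ℤ) * chooseZ (k + (m:ℤ) - 1 - ((i : ℕ):ℤ)) ((m:ℤ) - 1)) m,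
      Nat.choose_eq_zero_of_lt (show m < 2*m+1+1 by omega)]
    have : ∀ i ∈ Finset.range m,
        (m.choose (2*i+1+1) : ℤ) * chooseZ (k + (m:ℤ) - 1 - ((i+1 : ℕ):ℤ)) ((m:ℤ) - 1)
        = (m.choose (2*(i+1)) : ℤ) * chooseZ (k + (m:ℤ) - 1 - ((i+1 : ℕ):ℤ)) ((m:ℤ) - 1) := by
      intro i _
      rw [show 2*(i+1) = 2*i+1+1 by ring]
    rw [Finset.sum_congr rfl this]
    push_cast [Nat.choose_zero_right]
    ring
  rw [eS]
  rw [← eT]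
  push_cast
  ring

lemma main (m : ℕ) : ∀ K : ℕ,
    (S m (K:ℤ) = chooseZ ((m:ℤ) + 2*K) ((m:ℤ) - 1))
    ∧ (T m (K:ℤ) = chooseZ ((m:ℤ) + 2*K - 1) ((m:ℤ) - 1)) := by
  induction m with
  | zero =>
    intro K
    constructor
    · rw [S, chooseZ_of_neg (by simp : ((0:ℕ):ℤ) - 1 < 0)]
      simp
    · rw [T, chooseZ_of_neg (by simp : ((0:ℕ):ℤ) - 1 < 0)]
      apply Finset.sum_eq_zero
      intro i hi
      rw [chooseZ_of_neg (by simp : ((0:ℕ):ℤ) - 1 < 0), mul_zero]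
  | succ m ih =>
    intro K
    induction K with
    | zero =>
      constructor
      · rw [S, Finset.sum_eq_single 0]
        · rw [Nat.choose_one_right,
            show ((0:ℕ):ℤ) + ((m+1:ℕ):ℤ) - 1 - ((0:ℕ):ℤ) = ((m:ℕ):ℤ) by push_cast; ring,
            show ((m+1:ℕ):ℤ) - 1 = ((m:ℕ):ℤ) by push_cast; ring,
            chooseZ_natCast, Nat.choose_self,
            show ((m+1:ℕ):ℤ) + 2*((0:ℕ):ℤ) = ((m+1:ℕ):ℤ) by push_cast; ring,
            chooseZ_natCast, Nat.choose_succ_self_right]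
          push_cast; ring
        · intro b _ hb
          apply mul_eq_zero_of_right
          apply chooseZ_of_lt
          push_cast
          omega
        · intro h
          simp at h
      · rw [T, Finset.sum_eq_single 0]
        · rw [Nat.choose_zero_right,
            show ((0:ℕ):ℤ) + ((m+1:ℕ):ℤ) - 1 - ((0:ℕ):ℤ) = ((m:ℕ):ℤ) by push_cast; ring,
            show ((m+1:ℕ):ℤ) - 1 = ((m:ℕ):ℤ) by push_cast; ring,
            chooseZ_natCast, Nat.choose_self,
            show ((m+1:ℕ):ℤ) + 2*((0:ℕ):ℤ) - 1 = ((m:ℕ):ℤ) by push_cast; ring,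
            chooseZ_natCast, Nat.choose_self]
          norm_num
        · intro b _ hb
          apply mul_eq_zero_of_right
          apply chooseZ_of_lt
          push_cast
          omega
        · intro h
          simp at h
    | succ K ihK =>
      constructor
      · have hd := S_diff m ((K:ℤ)+1) (by omega)
        rw [show ((K:ℤ)+1-1) = (K:ℤ) by ring] at hd
        have h1 := ihK.1
        have h3 := (ih (K+1)).1
        have h4 := (ih (K+1)).2
        have p1 := chooseZ_pascal ((m:ℤ)+2*(K:ℤ)+3) ((m:ℤ)) (by omega)
        have p2 := chooseZ_pascal ((m:ℤ)+2*(K:ℤ)+2) ((m:ℤ)) (by omega)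
        push_cast at h1 h3 h4 ⊢
        ring_nf at hd h1 h3 h4 p1 p2 ⊢
        linarith
      · have hd := T_diff m ((K:ℤ)+1) (by omega)
        rw [show ((K:ℤ)+1-1) = (K:ℤ) by ring] at hd
        have h2 := ihK.2
        have h4 := (ih (K+1)).2
        have h5 := (ih K).1
        have p3 := chooseZ_pascal ((m:ℤ)+2*(K:ℤ)+2) ((m:ℤ)) (by omega)
        have p4 := chooseZ_pascal ((m:ℤ)+2*(K:ℤ)+1) ((m:ℤ)) (by omega)
        push_cast at h2 h4 h5 ⊢
        ring_nf at hd h2 h4 h5 p3 p4 ⊢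
        linarith

/-- The difference relation `Q_j(k) − Q_j(k−1) = C(j+2k−2, j−3)` for `j ≥ 2`, `k ≥ 1`. -/
theorem stmt4 (j : ℕ) (k : ℤ) (hj : 2 ≤ j) (hk : 1 ≤ k) :
    Q j k - Q j (k - 1) = chooseZ ((j : ℤ) + 2 * k - 2) ((j : ℤ) - 3) := by
  obtain ⟨K, rfl⟩ := Int.eq_ofNat_of_zero_le (by omega : (0:ℤ) ≤ k)
  have hK : 1 ≤ K := by exact_mod_cast hk
  rcases Nat.lt_or_ge j 3 with hj3 | hj3
  · have hj2 : j = 2 := by omega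
    subst hj2
    rw [Q, Q, chooseZ_of_neg (by norm_num : ((2:ℕ):ℤ) - 3 < 0), ← Finset.sum_sub_distrib]
    apply Finset.sum_eq_zero
    intro i hi
    rw [show (2-2) = 0 from rfl, Nat.choose_zero_succ]
    push_cast
    ring
  · obtain ⟨M, rfl⟩ : ∃ M, j = M + 2 := ⟨j - 2, by omega⟩
    have hM : 1 ≤ M := by omega
    have h1 : Q (M+2) (K:ℤ) - Q (M+2) ((K:ℤ) - 1)
        = ∑ i ∈ Finset.range ((M+2)/2+1),
            (M.choose (2*i+1) : ℤ) * chooseZ ((K:ℤ) + M - 1 - i) ((M:ℤ) - 1) := by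
      rw [Q, Q, ← Finset.sum_sub_distrib]
      refine Finset.sum_congr rfl ?_
      intro i hi
      rw [show (M+2-2) = M from rfl,
        show ((K:ℤ) - i + ((M+2:ℕ):ℤ) - 2) = ((K:ℤ) + M - 1 - i) + 1 by push_cast; ring,
        show ((K:ℤ) - 1 - i + ((M+2:ℕ):ℤ) - 2) = ((K:ℤ) + M - 1 - i) by push_cast; ring,
        show (((M+2:ℕ):ℤ) - 2) = ((M:ℤ) - 1) + 1 by push_cast; ring]
      apply term_pascal'
      intro hc
      have hb : 2*i+1 ≤ M := by
        by_contra hb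
        rw [Nat.choose_eq_zero_of_lt (by omega)] at hc
        simp at hc
      omega
    have h2 : ∑ i ∈ Finset.range ((M+2)/2+1),
            (M.choose (2*i+1) : ℤ) * chooseZ ((K:ℤ) + M - 1 - i) ((M:ℤ) - 1)
          = S M (K:ℤ) := by
      rw [S]
      apply Finset.sum_subset
      · intro x hx
        simp only [Finset.mem_range] at *
        omega
      · intro x _ hnx
        simp only [Finset.mem_range] at hnx
        rw [Nat.choose_eq_zero_of_lt (by omega)]
        push_cast
        ring
    rw [h1, h2, (main M K).1]
    congr 1 <;> push_cast <;> ring
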